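/- Let K be a field of characteristic 0, let R be a commutative K-algebra, let δ be a locally nilpotent K-derivation of R, and let d be any K-derivation of R. If A = ker δ is a finitely generated K-algebra, then for each t ≥ 0 the A-submodule of R generated by d^t(A) is a finitely generated A-module. -/

import Mathlib

/-!
Write `A = K[S]` with `S` finite and let `F n` be the `A`-span of all products of at most `n`
elements `d^k s` with `k ≤ n`, `s ∈ S`. Then `F i * F j ≤ F (i + j)`, so the general Leibniz rule
shows by induction on the structure of `x ∈ K[S]` that `d^n x ∈ F n` for every `n`. Each `F n` is
a finitely generated `A`-module and `A` is Noetherian, so the span of `d^t(A)` inside `F t` is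
finitely generated too.
-/

open Finset

namespace Derivation

variable {K R : Type*} [CommRing K] [CommRing R] [Algebra K R] (d : Derivation K R R)

theorem pow_apply_mul (n : ℕ) (a b : R) :
    (d.toLinearMap ^ n) (a * b) = ∑ ij ∈ antidiagonal n,
      n.choose ij.1 • ((d.toLinearMap ^ ij.1) a * (d.toLinearMap ^ ij.2) b) := by
  induction n with
  | zero => simp
  | succ n ih =>
    rw [sum_antidiagonal_choose_succ_nsmul (M := R)
      (fun i j ↦ (d.toLinearMap ^ i) a * (d.toLinearMap ^ j) b) n]
    simp only [pow_succ', Module.End.mul_apply, ih, map_sum, map_nsmul, coeFn_coe, leibniz,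
      smul_eq_mul, smul_add, sum_add_distrib]
    refine congrArg _ (sum_congr rfl fun ⟨i, j⟩ hij ↦ ?_)
    rw [n.choose_symm_of_eq_add (mem_antidiagonal.1 hij).symm, mul_comm]

theorem pow_apply_mem_of_mem_adjoin {B : Type*} [CommRing B] [Algebra B R]
    (F : ℕ → Submodule B R) (hF : ∀ i j, F i * F j ≤ F (i + j))
    (hK : ∀ c : K, algebraMap K R c ∈ F 0) {S : Set R}
    (hS : ∀ s ∈ S, ∀ n, (d.toLinearMap ^ n) s ∈ F n) {x : R} (hx : x ∈ Algebra.adjoin K S)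
    (n : ℕ) : (d.toLinearMap ^ n) x ∈ F n := by
  induction hx using Algebra.adjoin_induction generalizing n with
  | mem s hs => exact hS s hs n
  | algebraMap c =>
    cases n with
    | zero => simpa using hK c
    | succ n => simp [pow_succ, Module.End.mul_apply]
  | add x y _ _ hx hy => simpa only [map_add] using add_mem (hx n) (hy n)
  | mul x y _ _ hx hy =>
    rw [pow_apply_mul]
    refine sum_mem fun ij hij ↦ Submodule.smul_of_tower_mem _ _ ?_
    rw [← mem_antidiagonal.1 hij]
    exact hF _ _ (Submodule.mul_mem_mul (hx _) (hy _))

variable (A : Subalgebra K R) (S : Set R)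

def leibnizGenerators (n : ℕ) : Submodule A R :=
  Submodule.span A (insert 1 (Set.image2 (fun k s ↦ (d.toLinearMap ^ k) s) (Set.Iic n) S))

def leibnizFiltration (n : ℕ) : Submodule A R :=
  d.leibnizGenerators A S n ^ n

theorem leibnizGenerators_mono : Monotone (d.leibnizGenerators A S) := fun _ _ hmn ↦
  Submodule.span_mono (Set.insert_subset_insert (Set.image2_subset_right (Set.Iic_subset_Iic.2 hmn)))

theorem leibnizFiltration_mul_le (i j : ℕ) :
    d.leibnizFiltration A S i * d.leibnizFiltration A S j ≤ d.leibnizFiltration A S (i + j) := by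
  rw [leibnizFiltration, leibnizFiltration, leibnizFiltration, pow_add]
  exact mul_le_mul' (pow_le_pow_left' (d.leibnizGenerators_mono A S (Nat.le_add_right i j)) i)
    (pow_le_pow_left' (d.leibnizGenerators_mono A S (Nat.le_add_left j i)) j)

theorem pow_apply_mem_leibnizFiltration (hSA : S ⊆ A) {s : R} (hs : s ∈ S) (n : ℕ) :
    (d.toLinearMap ^ n) s ∈ d.leibnizFiltration A S n := by
  rcases eq_or_ne n 0 with rfl | hn
  · simpa [leibnizFiltration] using Submodule.algebraMap_mem (A := R) (⟨s, hSA hs⟩ : A)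
  · have hone : 1 ≤ d.leibnizGenerators A S n :=
      Submodule.one_le.2 (Submodule.subset_span (Set.mem_insert _ _))
    exact le_self_pow hone hn
      (Submodule.subset_span (Set.mem_insert_of_mem _ (Set.mem_image2_of_mem Set.self_mem_Iic hs)))

theorem algebraMap_mem_leibnizFiltration_zero (c : K) :
    algebraMap K R c ∈ d.leibnizFiltration A S 0 := by
  simp [leibnizFiltration]

theorem fg_leibnizFiltration (hS : S.Finite) (n : ℕ) : (d.leibnizFiltration A S n).FG :=
  (Submodule.fg_span (((Set.finite_Iic n).image2 _ hS).insert 1)).pow n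

end Derivation

theorem Subalgebra.fg_span_pow_derivation_image {K R : Type*} [CommRing K] [IsNoetherianRing K]
    [CommRing R] [Algebra K R] {A : Subalgebra K R} (hA : A.FG) (d : Derivation K R R) (t : ℕ) :
    (Submodule.span A ((d.toLinearMap ^ t) '' (A : Set R))).FG := by
  obtain ⟨S, hS⟩ := hA
  have hSA : (S : Set R) ⊆ A := hS ▸ Algebra.subset_adjoin
  have : Algebra.FiniteType K A := (Subalgebra.fg_iff_finiteType A).1 ⟨S, hS⟩
  have : IsNoetherianRing A := Algebra.FiniteType.isNoetherianRing K A
  refine (d.fg_leibnizFiltration A S S.finite_toSet t).of_le (Submodule.span_le.2 ?_)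
  rintro _ ⟨x, hx, rfl⟩
  exact d.pow_apply_mem_of_mem_adjoin _ (d.leibnizFiltration_mul_le A S)
    (d.algebraMap_mem_leibnizFiltration_zero A S)
    (fun _ hs ↦ d.pow_apply_mem_leibnizFiltration A S hSA hs) (hS ▸ hx) t

theorem stmt_7_general (K R : Type*) [Field K] [CommRing R] [Algebra K R]
    (A : Subalgebra K R) (hAfg : A.FG)
    (d : Derivation K R R) (t : ℕ) :
    (Submodule.span A (((d.toLinearMap : _) ^ t) '' (A : Set R))).FG :=
  Subalgebra.fg_span_pow_derivation_image hAfg d t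

/-- If `δ` is a locally nilpotent derivation of a commutative `K`-algebra `R` whose
algebra of constants `A = ker δ` is a finitely generated `K`-algebra, and `d` is any
derivation of `R`, then for each `t` the `A`-submodule of `R` generated by `d^t(A)`
is a finitely generated `A`-module. -/
theorem stmt_7 (K R : Type*) [Field K] [CharZero K] [CommRing R] [Algebra K R]
    (δ : Derivation K R R)
    (hln : ∀ f : R, ∃ N : ℕ, ((δ.toLinearMap : _) ^ N) f = 0)
    (A : Subalgebra K R) (hA : ∀ x : R, x ∈ A ↔ δ x = 0) (hAfg : A.FG)
    (d : Derivation K R R) (t : ℕ) :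
    (Submodule.span A (((d.toLinearMap : _) ^ t) '' (A : Set R))).FG :=
  stmt_7_general K R A hAfg d t
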